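/- The polynomials C_{n,λ} and S_{n,λ} satisfy the addition theorem S_{n,λ}(x₁+x₂, y₁+y₂) = Σ_{k=0}^n binom(n,k) [ S_{n-k,λ}(x₁,y₁) C_{k,λ}(x₂,y₂) + C_{n-k,λ}(x₁,y₁) S_{k,λ}(x₂,y₂) ], and in particular S_{n,λ}(2x,2y) = 2 Σ_{k=0}^n binom(n,k) S_{n-k,λ}(x,y) C_{k,λ}(x,y). -/
import Mathlib


/-- The degenerate falling factorial with complex argument:
`(z)_{n,λ} = ∏_{j=0}^{n-1} (z - jλ)`. -/
noncomputable def degFallC (z : ℂ) (lam : ℝ) (n : ℕ) : ℂ :=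
  ∏ j ∈ Finset.range n, (z - (j : ℂ) * (lam : ℂ))

/-- `C_{n,λ}(x,y) = (1/2) Σ_{k=0}^n C(n,k) (x)_{n-k,λ} ((iy)_{k,λ} + (−iy)_{k,λ})`. -/
noncomputable def Cpoly (lam x y : ℝ) (n : ℕ) : ℂ :=
  (1 / 2) * ∑ k ∈ Finset.range (n + 1), (n.choose k : ℂ) * degFallC (x : ℂ) lam (n - k) *
    (degFallC (Complex.I * y) lam k + degFallC (-(Complex.I * y)) lam k)

/-- `S_{n,λ}(x,y) = (1/(2i)) Σ_{k=0}^n C(n,k) (x)_{n-k,λ} ((iy)_{k,λ} − (−iy)_{k,λ})`. -/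
noncomputable def Spoly (lam x y : ℝ) (n : ℕ) : ℂ :=
  (1 / (2 * Complex.I)) * ∑ k ∈ Finset.range (n + 1), (n.choose k : ℂ) *
    degFallC (x : ℂ) lam (n - k) *
    (degFallC (Complex.I * y) lam k - degFallC (-(Complex.I * y)) lam k)

lemma degFallC_zero (z : ℂ) (lam : ℝ) : degFallC z lam 0 = 1 :=
  Finset.prod_range_zero _

lemma degFallC_succ (z : ℂ) (lam : ℝ) (n : ℕ) :
    degFallC z lam (n + 1) = degFallC z lam n * (z - (n : ℂ) * (lam : ℂ)) :=
  Finset.prod_range_succ _ _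

/-- Degenerate Vandermonde / binomial identity. -/
lemma degFallC_vandermonde (lam : ℝ) (a b : ℂ) (n : ℕ) :
    degFallC (a + b) lam n =
      ∑ k ∈ Finset.range (n + 1), (n.choose k : ℂ) * degFallC a lam (n - k) *
        degFallC b lam k := by
  induction n with
  | zero => simp [degFallC]
  | succ n ih =>
    rw [degFallC_succ, ih, Finset.sum_mul]
    have hsplit : ∀ k ∈ Finset.range (n + 1),
        (n.choose k : ℂ) * degFallC a lam (n - k) * degFallC b lam k *
            (a + b - (n : ℂ) * (lam : ℂ))
          = (n.choose k : ℂ) * degFallC a lam (n + 1 - k) * degFallC b lam k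
            + (n.choose k : ℂ) * degFallC a lam (n - k) * degFallC b lam (k + 1) := by
      intro k hk
      have hk' : k ≤ n := Finset.mem_range_succ_iff.mp hk
      have h1 : degFallC a lam (n + 1 - k)
          = degFallC a lam (n - k) * (a - ((n - k : ℕ) : ℂ) * (lam : ℂ)) := by
        rw [Nat.succ_sub hk']
        exact degFallC_succ a lam (n - k)
      have h2 : degFallC b lam (k + 1) = degFallC b lam k * (b - (k : ℂ) * (lam : ℂ)) :=
        degFallC_succ b lam k
      have hcast : ((n - k : ℕ) : ℂ) = (n : ℂ) - (k : ℂ) := by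
        push_cast [hk']; ring
      rw [h1, h2, hcast]; ring
    rw [Finset.sum_congr rfl hsplit, Finset.sum_add_distrib]
    -- RHS target
    have hR : ∑ k ∈ Finset.range (n + 2), ((n + 1).choose k : ℂ) *
          degFallC a lam (n + 1 - k) * degFallC b lam k
        = (∑ k ∈ Finset.range (n + 1), ((n.choose k : ℂ) + (n.choose (k + 1) : ℂ)) *
            degFallC a lam (n - k) * degFallC b lam (k + 1))
          + degFallC a lam (n + 1) := by
      rw [Finset.sum_range_succ' (fun k => ((n + 1).choose k : ℂ) *
          degFallC a lam (n + 1 - k) * degFallC b lam k) (n + 1)]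
      simp only [Nat.choose_zero_right, Nat.cast_one, degFallC_zero, mul_one, one_mul,
        Nat.sub_zero, Nat.succ_sub_succ]
      congr 1
      refine Finset.sum_congr rfl fun k _ => ?_
      rw [Nat.choose_succ_succ]
      push_cast
      ring
    have hL1 : ∑ k ∈ Finset.range (n + 1), (n.choose k : ℂ) *
          degFallC a lam (n + 1 - k) * degFallC b lam k
        = (∑ k ∈ Finset.range (n + 1), (n.choose (k + 1) : ℂ) *
            degFallC a lam (n - k) * degFallC b lam (k + 1))
          + degFallC a lam (n + 1) := by
      rw [Finset.sum_range_succ' (fun k => (n.choose k : ℂ) *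
          degFallC a lam (n + 1 - k) * degFallC b lam k) n]
      simp only [Nat.choose_zero_right, Nat.cast_one, degFallC_zero, mul_one, one_mul,
        Nat.sub_zero, Nat.succ_sub_succ]
      congr 1
      rw [Finset.sum_range_succ]
      simp [Nat.choose_succ_self]
    rw [hR, hL1, add_right_comm]
    congr 1
    rw [← Finset.sum_add_distrib]
    refine Finset.sum_congr rfl fun k _ => ?_
    ring

lemma Cpoly_eq (lam x y : ℝ) (n : ℕ) :
    Cpoly lam x y n = (1 / 2) *
      (degFallC ((x : ℂ) + Complex.I * y) lam n + degFallC ((x : ℂ) - Complex.I * y) lam n) := by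
  unfold Cpoly
  have e : (x : ℂ) - Complex.I * y = (x : ℂ) + -(Complex.I * y) := by ring
  rw [e, degFallC_vandermonde, degFallC_vandermonde, ← Finset.sum_add_distrib]
  congr 1
  refine Finset.sum_congr rfl fun k _ => ?_
  ring

lemma Spoly_eq (lam x y : ℝ) (n : ℕ) :
    Spoly lam x y n = (1 / (2 * Complex.I)) *
      (degFallC ((x : ℂ) + Complex.I * y) lam n - degFallC ((x : ℂ) - Complex.I * y) lam n) := by
  unfold Spoly
  have e : (x : ℂ) - Complex.I * y = (x : ℂ) + -(Complex.I * y) := by ring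
  rw [e, degFallC_vandermonde, degFallC_vandermonde, ← Finset.sum_sub_distrib]
  congr 1
  refine Finset.sum_congr rfl fun k _ => ?_
  ring

theorem Spoly_addition (lam : ℝ) (n : ℕ) :
    (∀ x₁ x₂ y₁ y₂ : ℝ, Spoly lam (x₁ + x₂) (y₁ + y₂) n =
      ∑ k ∈ Finset.range (n + 1), (n.choose k : ℂ) *
        (Spoly lam x₁ y₁ (n - k) * Cpoly lam x₂ y₂ k +
          Cpoly lam x₁ y₁ (n - k) * Spoly lam x₂ y₂ k)) ∧
    (∀ x y : ℝ, Spoly lam (2 * x) (2 * y) n =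
      2 * ∑ k ∈ Finset.range (n + 1), (n.choose k : ℂ) *
        (Spoly lam x y (n - k) * Cpoly lam x y k)) := by
  have main : ∀ x₁ x₂ y₁ y₂ : ℝ, Spoly lam (x₁ + x₂) (y₁ + y₂) n =
      ∑ k ∈ Finset.range (n + 1), (n.choose k : ℂ) *
        (Spoly lam x₁ y₁ (n - k) * Cpoly lam x₂ y₂ k +
          Cpoly lam x₁ y₁ (n - k) * Spoly lam x₂ y₂ k) := by
    intro x₁ x₂ y₁ y₂
    have e : ∀ k ∈ Finset.range (n + 1), (n.choose k : ℂ) *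
        (Spoly lam x₁ y₁ (n - k) * Cpoly lam x₂ y₂ k +
          Cpoly lam x₁ y₁ (n - k) * Spoly lam x₂ y₂ k)
        = (1 / (2 * Complex.I)) *
          ((n.choose k : ℂ) * degFallC ((x₁ : ℂ) + Complex.I * y₁) lam (n - k) *
              degFallC ((x₂ : ℂ) + Complex.I * y₂) lam k
            - (n.choose k : ℂ) * degFallC ((x₁ : ℂ) - Complex.I * y₁) lam (n - k) *
              degFallC ((x₂ : ℂ) - Complex.I * y₂) lam k) := by
      intro k _
      rw [Spoly_eq, Spoly_eq, Cpoly_eq, Cpoly_eq]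
      have hI := Complex.I_ne_zero
      field_simp
      ring
    rw [Finset.sum_congr rfl e, ← Finset.mul_sum, Finset.sum_sub_distrib,
      ← degFallC_vandermonde, ← degFallC_vandermonde, Spoly_eq]
    have hA : ((x₁ + x₂ : ℝ) : ℂ) + Complex.I * ((y₁ + y₂ : ℝ) : ℂ)
        = ((x₁ : ℂ) + Complex.I * y₁) + ((x₂ : ℂ) + Complex.I * y₂) := by push_cast; ring
    have hB : ((x₁ + x₂ : ℝ) : ℂ) - Complex.I * ((y₁ + y₂ : ℝ) : ℂ)
        = ((x₁ : ℂ) - Complex.I * y₁) + ((x₂ : ℂ) - Complex.I * y₂) := by push_cast; ring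
    rw [hA, hB]
  refine ⟨main, fun x y => ?_⟩
  have h2x : (2 : ℝ) * x = x + x := by ring
  have h2y : (2 : ℝ) * y = y + y := by ring
  rw [h2x, h2y, main x x y y]
  have hsym : ∑ k ∈ Finset.range (n + 1), (n.choose k : ℂ) *
        (Cpoly lam x y (n - k) * Spoly lam x y k)
      = ∑ k ∈ Finset.range (n + 1), (n.choose k : ℂ) *
        (Spoly lam x y (n - k) * Cpoly lam x y k) := by
    rw [← Finset.sum_range_reflect]
    refine Finset.sum_congr rfl fun k hk => ?_
    have hk' : k ≤ n := Finset.mem_range_succ_iff.mp hk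
    have h1 : n + 1 - 1 - k = n - k := by omega
    have h2 : n - (n - k) = k := Nat.sub_sub_self hk'
    rw [h1, h2, Nat.choose_symm hk']
    ring
  calc ∑ k ∈ Finset.range (n + 1), (n.choose k : ℂ) *
        (Spoly lam x y (n - k) * Cpoly lam x y k + Cpoly lam x y (n - k) * Spoly lam x y k)
      = (∑ k ∈ Finset.range (n + 1), (n.choose k : ℂ) *
          (Spoly lam x y (n - k) * Cpoly lam x y k))
        + ∑ k ∈ Finset.range (n + 1), (n.choose k : ℂ) *
          (Cpoly lam x y (n - k) * Spoly lam x y k) := by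
        rw [← Finset.sum_add_distrib]
        exact Finset.sum_congr rfl fun k _ => by ring
    _ = 2 * ∑ k ∈ Finset.range (n + 1), (n.choose k : ℂ) *
          (Spoly lam x y (n - k) * Cpoly lam x y k) := by rw [hsym]; ring
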